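/- Let m, n ≥ 2 and let Γ be the one-edge bridge gluing of the complete graphs K_m and K_n, joining a chosen vertex v_m ∈ K_m to a chosen vertex v_n ∈ K_n by a single new edge (a graph on m + n vertices). Then the characteristic polynomial of the Laplacian L of Γ is det(L − λ·1) = (−1)^{m+n} · λ · (λ−m)^{m−2} · (λ−n)^{n−2} · q(λ), where q(λ) = λ³ − (m+n+2)λ² + (1 + (m+1)(n+1))λ − (m+n), as polynomials in λ over ℝ. -/

import Mathlib

open Polynomial

open scoped Classical

/-- `det (M - λ·1)`, the characteristic determinant of a square real matrix,
as a polynomial in `λ`. -/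
noncomputable def charDet {n : Type*} [Fintype n] [DecidableEq n] (M : Matrix n n ℝ) :
    ℝ[X] :=
  (M.map C - (X : ℝ[X]) • 1).det

/-- The one-edge bridge gluing of `G₁` and `G₂`: the graph on `V₁ ⊕ V₂` with a single new
edge joining `v₁` to `v₂`. -/
def bridgeGlueOne {V₁ V₂ : Type*} (G₁ : SimpleGraph V₁) (G₂ : SimpleGraph V₂)
    (v₁ : V₁) (v₂ : V₂) : SimpleGraph (V₁ ⊕ V₂) where
  Adj x y :=
    match x, y with
    | Sum.inl u, Sum.inl v => G₁.Adj u v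
    | Sum.inr u, Sum.inr v => G₂.Adj u v
    | Sum.inl u, Sum.inr v => u = v₁ ∧ v = v₂
    | Sum.inr u, Sum.inl v => v = v₁ ∧ u = v₂
  symm := ⟨by
    rintro (u | u) (v | v) h
    · exact G₁.symm.symm _ _ h
    · exact h
    · exact h
    · exact G₂.symm.symm _ _ h⟩
  loopless := ⟨by
    rintro (u | u) h
    · exact G₁.loopless.irrefl u h
    · exact G₂.loopless.irrefl u h⟩

/-!
The Laplacian of the glued graph is the block-diagonal Laplacian of `K_m ⊔ K_n` plus the
rank-one matrix `e eᵀ`, where `e = e_{vm} - e_{vn}`. Off the spectra of the two blocks, the matrix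
determinant lemma gives
`det (L - t) = det (L₁ - t) * det (L₂ - t) * (1 + (L₁ - t)⁻¹ vm vm + (L₂ - t)⁻¹ vn vn)`.
For `K_k`, `L - t = (k - t) I - J` with `J` the all-ones matrix; its determinant is
`-t (k - t) ^ (k - 1)` and its inverse is `(k - t)⁻¹ (I - t⁻¹ J)`. Substituting these shows that
both sides of the identity agree at every real `t ∉ {0, m, n}`, so they are equal as polynomials.
-/

namespace Matrix

variable {R : Type*} [CommRing R]

theorem det_add_vecMulVec {ι : Type*} [Fintype ι] [DecidableEq ι]
    {A : Matrix ι ι R} (hA : IsUnit A.det) (u v : ι → R) :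
    (A + vecMulVec u v).det = A.det * (1 + v ⬝ᵥ A⁻¹ *ᵥ u) := by
  rw [vecMulVec_eq Unit, det_add_replicateCol_mul_replicateRow hA, det_unique (n := Unit),
    Matrix.mul_assoc, ← replicateCol_mulVec, add_apply, one_apply_eq,
    replicateRow_mul_replicateCol_apply]

theorem det_fromBlocks_add_vecMulVec_single_sub_single {ι₁ ι₂ : Type*}
    [Fintype ι₁] [Fintype ι₂] [DecidableEq ι₁] [DecidableEq ι₂]
    {A₁ : Matrix ι₁ ι₁ R} {A₂ : Matrix ι₂ ι₂ R} (h₁ : IsUnit A₁.det) (h₂ : IsUnit A₂.det)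
    (i₁ : ι₁) (i₂ : ι₂) :
    (fromBlocks A₁ 0 0 A₂ + vecMulVec (Pi.single (Sum.inl i₁) 1 - Pi.single (Sum.inr i₂) 1)
        (Pi.single (Sum.inl i₁) 1 - Pi.single (Sum.inr i₂) 1)).det =
      A₁.det * A₂.det * (1 + A₁⁻¹ i₁ i₁ + A₂⁻¹ i₂ i₂) := by
  have hA : IsUnit (fromBlocks A₁ 0 0 A₂).det := by
    rw [det_fromBlocks_zero₂₁]; exact h₁.mul h₂
  rw [det_add_vecMulVec hA, det_fromBlocks_zero₂₁, inv_fromBlocks_zero₂₁_of_isUnit_iff _ _ _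
    (iff_of_true ((isUnit_iff_isUnit_det _).mpr h₁) ((isUnit_iff_isUnit_det _).mpr h₂))]
  simp [dotProduct, mulVec, Pi.single_apply, add_assoc]

end Matrix

theorem eval_charDet {ι : Type*} [Fintype ι] [DecidableEq ι] (M : Matrix ι ι ℝ)
    (t : ℝ) : (charDet M).eval t = (M - t • 1).det := by
  rw [charDet, ← Polynomial.coe_evalRingHom, RingHom.map_det]
  congr
  ext i j
  obtain rfl | hij := eq_or_ne i j <;> simp [*]

namespace SimpleGraph

open Matrix

section Bridge

variable {V₁ V₂ : Type*} (G₁ : SimpleGraph V₁) (G₂ : SimpleGraph V₂) (v₁ : V₁) (v₂ : V₂)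

@[simp]
theorem bridgeGlueOne_adj_inl_inl {a b : V₁} :
    (bridgeGlueOne G₁ G₂ v₁ v₂).Adj (.inl a) (.inl b) ↔ G₁.Adj a b := Iff.rfl

@[simp]
theorem bridgeGlueOne_adj_inr_inr {a b : V₂} :
    (bridgeGlueOne G₁ G₂ v₁ v₂).Adj (.inr a) (.inr b) ↔ G₂.Adj a b := Iff.rfl

@[simp]
theorem bridgeGlueOne_adj_inl_inr {a : V₁} {b : V₂} :
    (bridgeGlueOne G₁ G₂ v₁ v₂).Adj (.inl a) (.inr b) ↔ a = v₁ ∧ b = v₂ := Iff.rfl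

@[simp]
theorem bridgeGlueOne_adj_inr_inl {a : V₂} {b : V₁} :
    (bridgeGlueOne G₁ G₂ v₁ v₂).Adj (.inr a) (.inl b) ↔ a = v₂ ∧ b = v₁ :=
  and_comm

variable [Fintype V₁] [Fintype V₂] [DecidableRel (bridgeGlueOne G₁ G₂ v₁ v₂).Adj]

theorem degree_bridgeGlueOne_inl [DecidableRel G₁.Adj] (a : V₁) :
    (bridgeGlueOne G₁ G₂ v₁ v₂).degree (.inl a) = G₁.degree a + if a = v₁ then 1 else 0 := by
  rw [← Nat.cast_id ((bridgeGlueOne G₁ G₂ v₁ v₂).degree (.inl a)), degree_eq_sum_if_adj,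
    Fintype.sum_sum_type, ← Nat.cast_id (G₁.degree a), degree_eq_sum_if_adj]
  congr 1
  · exact Finset.sum_congr rfl fun b _ ↦ by congr 1
  · by_cases h : a = v₁ <;> simp [h]

theorem degree_bridgeGlueOne_inr [DecidableRel G₂.Adj] (b : V₂) :
    (bridgeGlueOne G₁ G₂ v₁ v₂).degree (.inr b) = G₂.degree b + if b = v₂ then 1 else 0 := by
  rw [← Nat.cast_id ((bridgeGlueOne G₁ G₂ v₁ v₂).degree (.inr b)), degree_eq_sum_if_adj,
    Fintype.sum_sum_type, ← Nat.cast_id (G₂.degree b), degree_eq_sum_if_adj, add_comm]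
  congr 1
  · exact Finset.sum_congr rfl fun a _ ↦ by congr 1
  · by_cases h : b = v₂ <;> simp [h]

variable [DecidableRel G₁.Adj] [DecidableRel G₂.Adj] [DecidableEq V₁] [DecidableEq V₂]

theorem lapMatrix_bridgeGlueOne (R : Type*) [Ring R] :
    (bridgeGlueOne G₁ G₂ v₁ v₂).lapMatrix R =
      fromBlocks (G₁.lapMatrix R) 0 0 (G₂.lapMatrix R) +
        vecMulVec (Pi.single (Sum.inl v₁) 1 - Pi.single (Sum.inr v₂) 1)
          (Pi.single (Sum.inl v₁) 1 - Pi.single (Sum.inr v₂) 1) := by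
  ext (a | a) (b | b) <;>
    simp only [lapMatrix, degMatrix, adjMatrix, Matrix.sub_apply, Matrix.add_apply,
      diagonal_apply, of_apply, fromBlocks_apply₁₁, fromBlocks_apply₁₂, fromBlocks_apply₂₁, fromBlocks_apply₂₂,
      vecMulVec_apply, degree_bridgeGlueOne_inl, degree_bridgeGlueOne_inr,
      bridgeGlueOne_adj_inl_inl, bridgeGlueOne_adj_inr_inr, bridgeGlueOne_adj_inl_inr,
      bridgeGlueOne_adj_inr_inl, Pi.sub_apply, Pi.single_apply, Sum.inl.injEq, Sum.inr.injEq,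
      reduceCtorEq] <;>
    split_ifs <;> simp_all

theorem det_lapMatrix_bridgeGlueOne_sub_smul {R : Type*} [CommRing R] {t : R}
    (h₁ : IsUnit (G₁.lapMatrix R - t • 1).det) (h₂ : IsUnit (G₂.lapMatrix R - t • 1).det) :
    ((bridgeGlueOne G₁ G₂ v₁ v₂).lapMatrix R - t • 1).det =
      (G₁.lapMatrix R - t • 1).det * (G₂.lapMatrix R - t • 1).det *
        (1 + (G₁.lapMatrix R - t • 1)⁻¹ v₁ v₁ + (G₂.lapMatrix R - t • 1)⁻¹ v₂ v₂) := by
  rw [← det_fromBlocks_add_vecMulVec_single_sub_single h₁ h₂, lapMatrix_bridgeGlueOne,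
    add_sub_right_comm, ← fromBlocks_one, fromBlocks_smul, sub_eq_add_neg, fromBlocks_neg,
    fromBlocks_add]
  simp [sub_eq_add_neg]

end Bridge

section Complete

variable {V : Type*} [Fintype V] [DecidableEq V]

theorem lapMatrix_top (R : Type*) [Ring R] :
    (⊤ : SimpleGraph V).lapMatrix R = (Fintype.card V : R) • 1 - vecMulVec 1 1 := by
  ext i j
  have hcard : 1 ≤ Fintype.card V := Fintype.card_pos_iff.mpr ⟨i⟩
  obtain rfl | hij := eq_or_ne i j <;>
    simp [lapMatrix, degMatrix, *, Nat.cast_sub hcard]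

variable {K : Type*} [Field K] {t : K}

theorem lapMatrix_top_sub_smul :
    (⊤ : SimpleGraph V).lapMatrix K - t • 1 =
      ((Fintype.card V : K) - t) • 1 + vecMulVec (-1) 1 := by
  rw [lapMatrix_top, sub_smul, neg_vecMulVec]
  abel

theorem det_lapMatrix_top_sub_smul [Nonempty V] (ht : t ≠ Fintype.card V) :
    ((⊤ : SimpleGraph V).lapMatrix K - t • 1).det =
      -t * ((Fintype.card V : K) - t) ^ (Fintype.card V - 1) := by
  have hkt : (Fintype.card V : K) - t ≠ 0 := sub_ne_zero.mpr ht.symm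
  have hinv : (((Fintype.card V : K) - t) • 1 : Matrix V V K)⁻¹ =
      ((Fintype.card V : K) - t)⁻¹ • 1 :=
    inv_eq_right_inv (by simp [smul_smul, hkt])
  rw [lapMatrix_top_sub_smul, det_add_vecMulVec (by simp [hkt]), det_smul, det_one, hinv,
    smul_mulVec, one_mulVec, dotProduct_smul, dotProduct_neg, one_dotProduct_one, smul_eq_mul,
    ← pow_sub_one_mul Fintype.card_ne_zero]
  field_simp
  ring

theorem lapMatrix_top_sub_smul_mul_eq_one (h0 : t ≠ 0) (ht : t ≠ Fintype.card V) :
    ((⊤ : SimpleGraph V).lapMatrix K - t • 1) *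
      (((Fintype.card V : K) - t)⁻¹ • (1 - t⁻¹ • vecMulVec 1 1 : Matrix V V K)) = 1 := by
  have hkt : (Fintype.card V : K) - t ≠ 0 := sub_ne_zero.mpr ht.symm
  have hJ : (vecMulVec 1 1 * vecMulVec 1 1 : Matrix V V K) =
      (Fintype.card V : K) • vecMulVec 1 1 := by
    rw [vecMulVec_mul_vecMulVec, one_dotProduct_one, vecMulVec_smul]
  rw [lapMatrix_top]
  simp only [Matrix.mul_smul, Matrix.sub_mul, Matrix.mul_sub, Matrix.smul_mul, Matrix.mul_smul,
    Matrix.one_mul, Matrix.mul_one, hJ]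
  match_scalars <;> field_simp; ring

theorem isUnit_det_lapMatrix_top_sub_smul (h0 : t ≠ 0) (ht : t ≠ Fintype.card V) :
    IsUnit ((⊤ : SimpleGraph V).lapMatrix K - t • 1).det :=
  isUnit_det_of_right_inverse (lapMatrix_top_sub_smul_mul_eq_one h0 ht)

theorem inv_lapMatrix_top_sub_smul (h0 : t ≠ 0) (ht : t ≠ Fintype.card V) :
    ((⊤ : SimpleGraph V).lapMatrix K - t • 1)⁻¹ =
      ((Fintype.card V : K) - t)⁻¹ • (1 - t⁻¹ • vecMulVec 1 1 : Matrix V V K) :=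
  inv_eq_right_inv (lapMatrix_top_sub_smul_mul_eq_one h0 ht)

end Complete

theorem det_lapMatrix_bridgeGlueOne_top_sub_smul {V₁ V₂ K : Type*} [Fintype V₁] [Fintype V₂]
    [DecidableEq V₁] [DecidableEq V₂] [Field K] (v₁ : V₁) (v₂ : V₂)
    [DecidableRel (bridgeGlueOne (⊤ : SimpleGraph V₁) (⊤ : SimpleGraph V₂) v₁ v₂).Adj]
    {t : K} (h0 : t ≠ 0) (h₁ : t ≠ Fintype.card V₁) (h₂ : t ≠ Fintype.card V₂) :
    ((bridgeGlueOne (⊤ : SimpleGraph V₁) (⊤ : SimpleGraph V₂) v₁ v₂).lapMatrix K - t • 1).det =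
      -t * ((Fintype.card V₁ : K) - t) ^ (Fintype.card V₁ - 1) *
        (-t * ((Fintype.card V₂ : K) - t) ^ (Fintype.card V₂ - 1)) *
        (1 + ((Fintype.card V₁ : K) - t)⁻¹ * (1 - t⁻¹) +
          ((Fintype.card V₂ : K) - t)⁻¹ * (1 - t⁻¹)) := by
  have : Nonempty V₁ := ⟨v₁⟩
  have : Nonempty V₂ := ⟨v₂⟩
  rw [det_lapMatrix_bridgeGlueOne_sub_smul _ _ _ _ (isUnit_det_lapMatrix_top_sub_smul h0 h₁)
      (isUnit_det_lapMatrix_top_sub_smul h0 h₂), det_lapMatrix_top_sub_smul h₁,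
    det_lapMatrix_top_sub_smul h₂, inv_lapMatrix_top_sub_smul h0 h₁,
    inv_lapMatrix_top_sub_smul h0 h₂]
  simp

end SimpleGraph

theorem bridge_complete_secular_identity {K : Type*} [Field K] {a b t : K} (h0 : t ≠ 0) (ha : a ≠ t)
    (hb : b ≠ t) (k l : ℕ) :
    t * (a - t) ^ (k + 1) * (t * (b - t) ^ (l + 1)) *
        (1 + (a - t)⁻¹ * (1 - t⁻¹) + (b - t)⁻¹ * (1 - t⁻¹)) =
      (-1) ^ (k + 2 + (l + 2)) * t * (t - a) ^ k * (t - b) ^ l *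
        (t ^ 3 - (a + b + 2) * t ^ 2 + (1 + (a + 1) * (b + 1)) * t - (a + b)) := by
  have hsign :
      (-1 : K) ^ (k + 2 + (l + 2)) * (t - a) ^ k * (t - b) ^ l = (a - t) ^ k * (b - t) ^ l := by
    have hpar : (-1 : K) ^ (k + 2 + (l + 2)) * (-1) ^ k * (-1) ^ l = 1 := by
      rw [← pow_add, ← pow_add]
      exact Even.neg_one_pow ⟨k + l + 2, by ring⟩
    rw [← neg_sub a t, ← neg_sub b t, neg_pow (a - t), neg_pow (b - t)]
    linear_combination (a - t) ^ k * (b - t) ^ l * hpar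
  have ha' : a - t ≠ 0 := sub_ne_zero.mpr ha
  have hb' : b - t ≠ 0 := sub_ne_zero.mpr hb
  calc _ = t * ((a - t) ^ k * (b - t) ^ l) *
        (t ^ 3 - (a + b + 2) * t ^ 2 + (1 + (a + 1) * (b + 1)) * t - (a + b)) := by
        field_simp
        ring
    _ = _ := by rw [← hsign]; ring

theorem charDet_bridgeGlueOne_complete (m n : ℕ) (hm : 2 ≤ m) (hn : 2 ≤ n)
    (vm : Fin m) (vn : Fin n) :
    charDet ((bridgeGlueOne (⊤ : SimpleGraph (Fin m)) (⊤ : SimpleGraph (Fin n))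
        vm vn).lapMatrix ℝ) =
      (-1 : ℝ[X]) ^ (m + n) * X * (X - C (m : ℝ)) ^ (m - 2) * (X - C (n : ℝ)) ^ (n - 2) *
        (X ^ 3 - C ((m : ℝ) + n + 2) * X ^ 2 +
          C (1 + ((m : ℝ) + 1) * ((n : ℝ) + 1)) * X - C ((m : ℝ) + n)) := by
  obtain ⟨k, rfl⟩ := Nat.exists_eq_add_of_le' hm
  obtain ⟨l, rfl⟩ := Nat.exists_eq_add_of_le' hn
  refine Polynomial.eq_of_infinite_eval_eq _ _
    ((Set.toFinite {0, ((k + 2 : ℕ) : ℝ), ((l + 2 : ℕ) : ℝ)}).infinite_compl.mono fun t ht ↦ ?_)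
  simp only [Set.mem_compl_iff, Set.mem_insert_iff, Set.mem_singleton_iff, not_or] at ht
  obtain ⟨h0, htm, htn⟩ := ht
  rw [Set.mem_ofPred_eq, eval_charDet, SimpleGraph.det_lapMatrix_bridgeGlueOne_top_sub_smul vm vn h0
    (by simpa using htm) (by simpa using htn)]
  simpa using bridge_complete_secular_identity h0 (Ne.symm htm) (Ne.symm htn) k l
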